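/- For each fixed ξ ∈ ℝ² \ {0}, the function μ : (0,∞) → ℝ, μ(s) = inf_{𝒜} E(·,·;s), is locally Lipschitz: for every compact interval [a,b] ⊂ (0,∞) there exists a constant K > 0 such that |μ(s₁) − μ(s₂)| ≤ K|s₁ − s₂| for all s₁, s₂ ∈ [a,b]. In particular μ ∈ C⁰(0,∞). -/

import Mathlib

open MeasureTheory Real Set Filter

/-- A barotropic pressure law `p ∈ C^∞((0,∞))`, nonnegative, strictly increasing,
with derivative `dp` and `1/p'` locally bounded on `(0,∞)`. -/
structure PressureLaw where
  p : ℝ → ℝ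
  dp : ℝ → ℝ
  smooth : ContDiffOn ℝ (⊤ : ℕ∞) p (Set.Ioi 0)
  nonneg : ∀ z ∈ Set.Ioi (0 : ℝ), 0 ≤ p z
  strictMono : StrictMonoOn p (Set.Ioi 0)
  hasDeriv : ∀ z ∈ Set.Ioi (0 : ℝ), HasDerivAt p (dp z) z
  dp_pos : ∀ z ∈ Set.Ioi (0 : ℝ), 0 < dp z
  inv_dp_locBdd : ∀ K : Set ℝ, IsCompact K → K ⊆ Set.Ioi 0 → ∃ C, ∀ z ∈ K, 1 / dp z ≤ C

/-- The Rayleigh–Taylor steady state `ρ₀` on `(-m, l)`: positive, bounded above and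
below by positive constants, smooth on `(-m,0)` and `(0,l)`, solving
`(p±(ρ₀))' = -g ρ₀` on the respective subinterval, with matching pressures and a
positive density jump `⟦ρ₀⟧ = ρ₀(0⁺) - ρ₀(0⁻) > 0` at the interface. -/
structure SteadyState (m l g : ℝ) (Pp Pm : PressureLaw) where
  ρ : ℝ → ℝ
  dρ : ℝ → ℝ
  lb : ℝ
  ub : ℝ
  lb_pos : 0 < lb
  bounds : ∀ x ∈ Set.Ioo (-m) l, lb ≤ ρ x ∧ ρ x ≤ ub
  smooth_neg : ContDiffOn ℝ (⊤ : ℕ∞) ρ (Set.Ioo (-m) 0)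
  smooth_pos : ContDiffOn ℝ (⊤ : ℕ∞) ρ (Set.Ioo 0 l)
  deriv_neg : ∀ x ∈ Set.Ioo (-m) 0, HasDerivAt ρ (dρ x) x
  deriv_pos : ∀ x ∈ Set.Ioo 0 l, HasDerivAt ρ (dρ x) x
  ode_neg : ∀ x ∈ Set.Ioo (-m) 0, Pm.dp (ρ x) * dρ x = -(g * ρ x)
  ode_pos : ∀ x ∈ Set.Ioo 0 l, Pp.dp (ρ x) * dρ x = -(g * ρ x)
  ρplus : ℝ
  ρminus : ℝ
  lim_plus : Filter.Tendsto ρ (nhdsWithin 0 (Set.Ioi 0)) (nhds ρplus)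
  lim_minus : Filter.Tendsto ρ (nhdsWithin 0 (Set.Iio 0)) (nhds ρminus)
  pressure_eq : Pp.p ρplus = Pm.p ρminus
  jump_pos : 0 < ρplus - ρminus

/-- `x ↦ p'(ρ₀(x))`, using `p₋` below the interface and `p₊` above it. -/
noncomputable def SteadyState.pd {m l g : ℝ} {Pp Pm : PressureLaw}
    (S : SteadyState m l g Pp Pm) (x : ℝ) : ℝ :=
  if x < 0 then Pm.dp (S.ρ x) else Pp.dp (S.ρ x)

/-- The density jump `⟦ρ₀⟧` at the interface. -/
noncomputable def SteadyState.jump {m l g : ℝ} {Pp Pm : PressureLaw}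
    (S : SteadyState m l g Pp Pm) : ℝ := S.ρplus - S.ρminus

/-- The energy `E(φ, ψ; s)` with spatial frequency `ξa = |ξ|`, rotation speed `ω`,
parameter `s`, where `dψ` denotes the derivative `ψ'`. -/
noncomputable def Een {m l g : ℝ} {Pp Pm : PressureLaw} (S : SteadyState m l g Pp Pm)
    (ω ξa s : ℝ) (φ ψ dψ : ℝ → ℝ) : ℝ :=
  (1 / 2) * ∫ x in Set.Ioo (-m) l,
    (S.pd x * S.ρ x * (dψ x + ξa * φ x) ^ 2 - 2 * g * ξa * S.ρ x * ψ x * φ x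
      + 4 * ω ^ 2 * s * S.ρ x * (φ x) ^ 2)

/-- `J(φ, ψ) = ½∫ ρ₀ (φ² + ψ²)`. -/
noncomputable def Jen {m l g : ℝ} {Pp Pm : PressureLaw} (S : SteadyState m l g Pp Pm)
    (φ ψ : ℝ → ℝ) : ℝ :=
  (1 / 2) * ∫ x in Set.Ioo (-m) l, S.ρ x * ((φ x) ^ 2 + (ψ x) ^ 2)

/-- Membership `(φ, ψ) ∈ L²(-m,l) × H₀¹(-m,l)`, where `dψ` is the derivative of `ψ`. -/
structure MemAdm (m l : ℝ) (φ ψ dψ : ℝ → ℝ) : Prop where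
  φ_mem : MemLp φ 2 (volume.restrict (Set.Ioo (-m) l))
  ψ_cont : ContinuousOn ψ (Set.Icc (-m) l)
  ψ_deriv : ∀ x ∈ Set.Ioo (-m) l, HasDerivAt ψ (dψ x) x
  ψ_mem : MemLp ψ 2 (volume.restrict (Set.Ioo (-m) l))
  dψ_mem : MemLp dψ 2 (volume.restrict (Set.Ioo (-m) l))
  bc_left : ψ (-m) = 0
  bc_right : ψ l = 0

/-- `μ(s) = μ(s; |ξ|) = inf_{(φ,ψ) ∈ 𝒜} E(φ, ψ; s)`. -/
noncomputable def muInf {m l g : ℝ} {Pp Pm : PressureLaw} (S : SteadyState m l g Pp Pm)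
    (ω ξa s : ℝ) : ℝ :=
  sInf {e : ℝ | ∃ φ ψ dψ : ℝ → ℝ, MemAdm m l φ ψ dψ ∧ Jen S φ ψ = 1 ∧
    e = Een S ω ξa s φ ψ dψ}

/-- `|ξ|` for `ξ ∈ ℝ²`. -/
noncomputable def mag (ξ : ℝ × ℝ) : ℝ := Real.sqrt (ξ.1 ^ 2 + ξ.2 ^ 2)

section AuxLemmas

open MeasureTheory Real Set Filter

variable {m l g : ℝ} {Pp Pm : PressureLaw}

lemma PressureLaw.dp_contOn (P : PressureLaw) : ContinuousOn P.dp (Set.Ioi 0) := by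
  have h := P.smooth.continuousOn_deriv_of_isOpen isOpen_Ioi (by simp)
  exact h.congr fun z hz => ((P.hasDeriv z hz).deriv).symm

lemma restrict_eq_union (hm : 0 < m) (hl : 0 < l) :
    (volume : Measure ℝ).restrict (Set.Ioo (-m) l)
      = volume.restrict (Set.Ioo (-m) 0 ∪ Set.Ioo 0 l) := by
  apply Measure.restrict_congr_set
  rw [MeasureTheory.ae_eq_set]
  constructor
  · refine measure_mono_null (fun x hx => ?_) (measure_singleton (0 : ℝ))
    rcases hx with ⟨hx1, hx2⟩
    rcases lt_trichotomy x 0 with h | h | h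
    · exact absurd (Or.inl ⟨hx1.1, h⟩) hx2
    · exact h
    · exact absurd (Or.inr ⟨h, hx1.2⟩) hx2
  · have hsub : Set.Ioo (-m) 0 ∪ Set.Ioo 0 l ⊆ Set.Ioo (-m) l := by
      rintro x (⟨h1, h2⟩ | ⟨h1, h2⟩) <;> exact ⟨by linarith, by linarith⟩
    rw [Set.diff_eq_empty.mpr hsub]; exact measure_empty

lemma rho_aesm (S : SteadyState m l g Pp Pm) (hm : 0 < m) (hl : 0 < l) :
    AEStronglyMeasurable S.ρ (volume.restrict (Set.Ioo (-m) l)) := by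
  rw [restrict_eq_union hm hl, aestronglyMeasurable_union_iff]
  exact ⟨(S.smooth_neg.continuousOn).aestronglyMeasurable measurableSet_Ioo,
    (S.smooth_pos.continuousOn).aestronglyMeasurable measurableSet_Ioo⟩

lemma rho_pos (S : SteadyState m l g Pp Pm) {x : ℝ} (hx : x ∈ Set.Ioo (-m) l) :
    0 < S.ρ x := S.lb_pos.trans_le (S.bounds x hx).1

lemma pd_pos (S : SteadyState m l g Pp Pm) {x : ℝ} (hx : x ∈ Set.Ioo (-m) l) :
    0 < S.pd x := by
  unfold SteadyState.pd
  split
  · exact Pm.dp_pos _ (rho_pos S hx)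
  · exact Pp.dp_pos _ (rho_pos S hx)

lemma pd_aesm (S : SteadyState m l g Pp Pm) (hm : 0 < m) (hl : 0 < l) :
    AEStronglyMeasurable S.pd (volume.restrict (Set.Ioo (-m) l)) := by
  rw [restrict_eq_union hm hl, aestronglyMeasurable_union_iff]
  constructor
  · have hmap : Set.MapsTo S.ρ (Set.Ioo (-m) 0) (Set.Ioi 0) := fun x hx =>
      rho_pos S ⟨hx.1, hx.2.trans hl⟩
    have hc : ContinuousOn S.pd (Set.Ioo (-m) 0) := by
      refine (Pm.dp_contOn.comp S.smooth_neg.continuousOn hmap).congr fun x hx => ?_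
      simp [SteadyState.pd, hx.2]
    exact hc.aestronglyMeasurable measurableSet_Ioo
  · have hmap : Set.MapsTo S.ρ (Set.Ioo 0 l) (Set.Ioi 0) := fun x hx =>
      rho_pos S ⟨by have := hx.1; linarith, hx.2⟩
    have hc : ContinuousOn S.pd (Set.Ioo 0 l) := by
      refine (Pp.dp_contOn.comp S.smooth_pos.continuousOn hmap).congr fun x hx => ?_
      simp [SteadyState.pd, not_lt.mpr hx.1.le]
    exact hc.aestronglyMeasurable measurableSet_Ioo

lemma pd_bound (S : SteadyState m l g Pp Pm) :
    ∃ C : ℝ, ∀ x ∈ Set.Ioo (-m) l, S.pd x ≤ C := by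
  have hsub : Set.Icc S.lb S.ub ⊆ Set.Ioi 0 := fun z hz => S.lb_pos.trans_le hz.1
  obtain ⟨C₁, hC₁⟩ := isCompact_Icc.exists_bound_of_continuousOn (Pm.dp_contOn.mono hsub)
  obtain ⟨C₂, hC₂⟩ := isCompact_Icc.exists_bound_of_continuousOn (Pp.dp_contOn.mono hsub)
  refine ⟨max C₁ C₂, fun x hx => ?_⟩
  have hb := S.bounds x hx
  unfold SteadyState.pd
  split
  · exact le_trans (le_trans (le_abs_self _) (hC₁ _ ⟨hb.1, hb.2⟩)) (le_max_left _ _)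
  · exact le_trans (le_trans (le_abs_self _) (hC₂ _ ⟨hb.1, hb.2⟩)) (le_max_right _ _)

lemma mul_memL2_integrable {μ : Measure ℝ} {f h : ℝ → ℝ}
    (hf : MemLp f 2 μ) (hh : MemLp h 2 μ) : Integrable (fun x => f x * h x) μ := by
  refine Integrable.mono' ((hf.integrable_sq.add hh.integrable_sq).div_const 2)
    (hf.aestronglyMeasurable.mul hh.aestronglyMeasurable) (Filter.Eventually.of_forall fun x => ?_)
  simp only [Pi.add_apply, Real.norm_eq_abs, abs_mul]
  nlinarith [sq_nonneg (|f x| - |h x|), abs_nonneg (f x), abs_nonneg (h x),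
    sq_abs (f x), sq_abs (h x)]

lemma integrable_rho_mul (S : SteadyState m l g Pp Pm) (hm : 0 < m) (hl : 0 < l)
    {h : ℝ → ℝ} (hh : Integrable h (volume.restrict (Set.Ioo (-m) l))) :
    Integrable (fun x => S.ρ x * h x) (volume.restrict (Set.Ioo (-m) l)) := by
  refine hh.bdd_mul (c := S.ub) (rho_aesm S hm hl) ?_
  filter_upwards [ae_restrict_mem measurableSet_Ioo] with x hx
  have hb := S.bounds x hx
  rw [Real.norm_eq_abs, abs_of_nonneg (S.lb_pos.le.trans hb.1)]
  exact hb.2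

lemma een_integrand_integrable (S : SteadyState m l g Pp Pm) (hm : 0 < m) (hl : 0 < l)
    (ω ξa s : ℝ) {φ ψ dψ : ℝ → ℝ} (A : MemAdm m l φ ψ dψ) :
    Integrable (fun x => S.pd x * S.ρ x * (dψ x + ξa * φ x) ^ 2
      - 2 * g * ξa * S.ρ x * ψ x * φ x + 4 * ω ^ 2 * s * S.ρ x * (φ x) ^ 2)
      (volume.restrict (Set.Ioo (-m) l)) := by
  obtain ⟨C, hC⟩ := pd_bound S
  have hq : MemLp (fun x => dψ x + ξa * φ x) 2 (volume.restrict (Set.Ioo (-m) l)) :=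
    A.dψ_mem.add (A.φ_mem.const_mul ξa)
  have h1 : Integrable (fun x => (S.pd x * S.ρ x) * (dψ x + ξa * φ x) ^ 2)
      (volume.restrict (Set.Ioo (-m) l)) := by
    refine hq.integrable_sq.bdd_mul (c := (max C 0) * S.ub)
      ((pd_aesm S hm hl).mul (rho_aesm S hm hl)) ?_
    filter_upwards [ae_restrict_mem measurableSet_Ioo] with x hx
    have hb := S.bounds x hx
    have hpd := pd_pos S hx
    rw [Real.norm_eq_abs, abs_mul, abs_of_nonneg hpd.le,
      abs_of_nonneg (S.lb_pos.le.trans hb.1)]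
    exact mul_le_mul (le_trans (hC x hx) (le_max_left _ _)) hb.2
      (S.lb_pos.le.trans hb.1) (le_max_right _ _)
  have h2 : Integrable (fun x => (2 * g * ξa * S.ρ x) * (ψ x * φ x))
      (volume.restrict (Set.Ioo (-m) l)) := by
    refine (mul_memL2_integrable A.ψ_mem A.φ_mem).bdd_mul (c := |2 * g * ξa| * S.ub)
      (((rho_aesm S hm hl).const_mul (2 * g * ξa))) ?_
    filter_upwards [ae_restrict_mem measurableSet_Ioo] with x hx
    have hb := S.bounds x hx
    rw [Real.norm_eq_abs, abs_mul]
    exact mul_le_mul_of_nonneg_left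
      (by rw [abs_of_nonneg (S.lb_pos.le.trans hb.1)]; exact hb.2) (abs_nonneg _)
  have h3 : Integrable (fun x => (4 * ω ^ 2 * s * S.ρ x) * (φ x) ^ 2)
      (volume.restrict (Set.Ioo (-m) l)) := by
    refine A.φ_mem.integrable_sq.bdd_mul (c := |4 * ω ^ 2 * s| * S.ub)
      (((rho_aesm S hm hl).const_mul (4 * ω ^ 2 * s))) ?_
    filter_upwards [ae_restrict_mem measurableSet_Ioo] with x hx
    have hb := S.bounds x hx
    rw [Real.norm_eq_abs, abs_mul]
    exact mul_le_mul_of_nonneg_left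
      (by rw [abs_of_nonneg (S.lb_pos.le.trans hb.1)]; exact hb.2) (abs_nonneg _)
  exact ((h1.sub h2).add h3).congr (Filter.Eventually.of_forall fun x => by
    simp only [Pi.add_apply, Pi.sub_apply]; ring)

lemma jen_eq_two (S : SteadyState m l g Pp Pm) {φ ψ : ℝ → ℝ} (hJ : Jen S φ ψ = 1) :
    ∫ x in Set.Ioo (-m) l, S.ρ x * ((φ x) ^ 2 + (ψ x) ^ 2) = 2 := by
  unfold Jen at hJ; linarith

lemma rho_sum_integrable (S : SteadyState m l g Pp Pm) (hm : 0 < m) (hl : 0 < l)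
    {φ ψ dψ : ℝ → ℝ} (A : MemAdm m l φ ψ dψ) :
    Integrable (fun x => S.ρ x * ((φ x) ^ 2 + (ψ x) ^ 2))
      (volume.restrict (Set.Ioo (-m) l)) := by
  refine integrable_rho_mul S hm hl ?_
  exact A.φ_mem.integrable_sq.add A.ψ_mem.integrable_sq

lemma rho_phi2_bounds (S : SteadyState m l g Pp Pm) (hm : 0 < m) (hl : 0 < l)
    {φ ψ dψ : ℝ → ℝ} (A : MemAdm m l φ ψ dψ) (hJ : Jen S φ ψ = 1) :
    0 ≤ (∫ x in Set.Ioo (-m) l, S.ρ x * (φ x) ^ 2) ∧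
      (∫ x in Set.Ioo (-m) l, S.ρ x * (φ x) ^ 2) ≤ 2 := by
  have hφ2 : Integrable (fun x => S.ρ x * (φ x) ^ 2) (volume.restrict (Set.Ioo (-m) l)) :=
    integrable_rho_mul S hm hl A.φ_mem.integrable_sq
  constructor
  · refine integral_nonneg_of_ae ?_
    filter_upwards [ae_restrict_mem measurableSet_Ioo] with x hx
    exact mul_nonneg (rho_pos S hx).le (sq_nonneg _)
  · have hmono := integral_mono_ae hφ2 (rho_sum_integrable S hm hl A) ?_
    · rwa [jen_eq_two S hJ] at hmono
    · filter_upwards [ae_restrict_mem measurableSet_Ioo] with x hx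
      have h0 : 0 ≤ S.ρ x := (rho_pos S hx).le
      nlinarith [sq_nonneg (ψ x)]

lemma een_diff (S : SteadyState m l g Pp Pm) (hm : 0 < m) (hl : 0 < l)
    (ω ξa s₁ s₂ : ℝ) {φ ψ dψ : ℝ → ℝ} (A : MemAdm m l φ ψ dψ) :
    Een S ω ξa s₁ φ ψ dψ - Een S ω ξa s₂ φ ψ dψ
      = 2 * ω ^ 2 * (s₁ - s₂) * ∫ x in Set.Ioo (-m) l, S.ρ x * (φ x) ^ 2 := by
  unfold Een
  rw [← mul_sub, ← integral_sub (een_integrand_integrable S hm hl ω ξa s₁ A)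
    (een_integrand_integrable S hm hl ω ξa s₂ A)]
  have : (∫ x in Set.Ioo (-m) l,
      ((S.pd x * S.ρ x * (dψ x + ξa * φ x) ^ 2 - 2 * g * ξa * S.ρ x * ψ x * φ x
        + 4 * ω ^ 2 * s₁ * S.ρ x * (φ x) ^ 2)
      - (S.pd x * S.ρ x * (dψ x + ξa * φ x) ^ 2 - 2 * g * ξa * S.ρ x * ψ x * φ x
        + 4 * ω ^ 2 * s₂ * S.ρ x * (φ x) ^ 2)))
      = ∫ x in Set.Ioo (-m) l, (4 * ω ^ 2 * (s₁ - s₂)) * (S.ρ x * (φ x) ^ 2) :=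
    integral_congr_ae (Filter.Eventually.of_forall fun x => by ring)
  rw [this, integral_const_mul]
  ring

lemma een_lb (S : SteadyState m l g Pp Pm) (hm : 0 < m) (hl : 0 < l)
    (hg0 : 0 ≤ g) (hξa : 0 ≤ ξa) {s : ℝ} (hs : 0 ≤ s) (ω : ℝ)
    {φ ψ dψ : ℝ → ℝ} (A : MemAdm m l φ ψ dψ) (hJ : Jen S φ ψ = 1) :
    -(g * ξa) ≤ Een S ω ξa s φ ψ dψ := by
  have hlow : Integrable (fun x => (-(g * ξa)) * (S.ρ x * ((φ x) ^ 2 + (ψ x) ^ 2)))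
      (volume.restrict (Set.Ioo (-m) l)) := (rho_sum_integrable S hm hl A).const_mul _
  have hmono := integral_mono_ae hlow (een_integrand_integrable S hm hl ω ξa s A) ?_
  · have hcalc : (∫ x in Set.Ioo (-m) l, (-(g * ξa)) * (S.ρ x * ((φ x) ^ 2 + (ψ x) ^ 2)))
        = -(g * ξa) * 2 := by rw [integral_const_mul, jen_eq_two S hJ]
    rw [hcalc] at hmono
    unfold Een
    linarith
  · filter_upwards [ae_restrict_mem measurableSet_Ioo] with x hx
    have hr : 0 ≤ S.ρ x := (rho_pos S hx).le
    have hpd : 0 ≤ S.pd x := (pd_pos S hx).le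
    have hgx : 0 ≤ g * ξa := mul_nonneg hg0 hξa
    nlinarith [mul_nonneg (mul_nonneg hpd hr) (sq_nonneg (dψ x + ξa * φ x)),
      mul_nonneg (mul_nonneg (by positivity : (0:ℝ) ≤ 4 * ω ^ 2 * s) hr) (sq_nonneg (φ x)),
      mul_nonneg (mul_nonneg hgx hr) (sq_nonneg (ψ x - φ x)),
      mul_nonneg (mul_nonneg hgx hr) (sq_nonneg (ψ x + φ x))]

lemma adm_nonempty (S : SteadyState m l g Pp Pm) (hm : 0 < m) (hl : 0 < l) :
    ∃ φ ψ dψ : ℝ → ℝ, MemAdm m l φ ψ dψ ∧ Jen S φ ψ = 1 := by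
  haveI : IsFiniteMeasure (volume.restrict (Set.Ioo (-m : ℝ) l)) :=
    ⟨by rw [Measure.restrict_apply_univ, Real.volume_Ioo]; exact ENNReal.ofReal_lt_top⟩
  have hρint : Integrable S.ρ (volume.restrict (Set.Ioo (-m) l)) := by
    refine Integrable.mono' (integrable_const S.ub) (rho_aesm S hm hl) ?_
    filter_upwards [ae_restrict_mem measurableSet_Ioo] with x hx
    rw [Real.norm_eq_abs, abs_of_nonneg (S.lb_pos.le.trans (S.bounds x hx).1)]
    exact (S.bounds x hx).2
  set R := ∫ x in Set.Ioo (-m) l, S.ρ x with hRdef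
  have hRpos : 0 < R := by
    have h1 := setIntegral_ge_of_const_le (μ := volume) measurableSet_Ioo
      (by rw [Real.volume_Ioo]; exact ENNReal.ofReal_ne_top)
      (fun x hx => (S.bounds x hx).1) hρint
    have hvol : (volume : Measure ℝ).real (Set.Ioo (-m) l) = l + m := by
      rw [measureReal_def, Real.volume_Ioo, ENNReal.toReal_ofReal (by linarith)]; ring
    rw [hvol, smul_eq_mul, ← hRdef] at h1
    have hlm : (0:ℝ) < l + m := by linarith
    nlinarith [mul_pos S.lb_pos hlm]
  refine ⟨fun _ => Real.sqrt (2 / R), fun _ => 0, fun _ => 0,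
    ⟨memLp_const _, continuousOn_const, fun x _ => hasDerivAt_const x 0,
      memLp_const _, memLp_const _, rfl, rfl⟩, ?_⟩
  have hsq : Real.sqrt (2 / R) ^ 2 = 2 / R := Real.sq_sqrt (by positivity)
  simp only [Jen]
  have hfun : (fun x => S.ρ x * (Real.sqrt (2 / R) ^ 2 + (0:ℝ) ^ 2))
      = fun x => (2 / R) * S.ρ x := by funext x; rw [hsq]; ring
  rw [hfun, integral_const_mul, ← hRdef]
  field_simp

end AuxLemmas

section MainLemmas

open MeasureTheory Real Set Filter

variable {m l g : ℝ} {Pp Pm : PressureLaw}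

lemma muInf_step (S : SteadyState m l g Pp Pm) (hm : 0 < m) (hl : 0 < l)
    (hg0 : 0 ≤ g) (ω : ℝ) {ξa : ℝ} (hξa : 0 ≤ ξa) {s₁ s₂ : ℝ}
    (hs₁ : 0 < s₁) (hs₂ : 0 < s₂) :
    muInf S ω ξa s₁ ≤ muInf S ω ξa s₂ + 4 * ω ^ 2 * |s₁ - s₂| := by
  have hbdd : BddBelow {e : ℝ | ∃ φ ψ dψ : ℝ → ℝ, MemAdm m l φ ψ dψ ∧ Jen S φ ψ = 1 ∧
      e = Een S ω ξa s₁ φ ψ dψ} := by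
    refine ⟨-(g * ξa), ?_⟩
    rintro e ⟨φ, ψ, dψ, A, hJ, rfl⟩
    exact een_lb S hm hl hg0 hξa hs₁.le ω A hJ
  have hne₂ : {e : ℝ | ∃ φ ψ dψ : ℝ → ℝ, MemAdm m l φ ψ dψ ∧ Jen S φ ψ = 1 ∧
      e = Een S ω ξa s₂ φ ψ dψ}.Nonempty := by
    obtain ⟨φ, ψ, dψ, A, hJ⟩ := adm_nonempty S hm hl
    exact ⟨_, φ, ψ, dψ, A, hJ, rfl⟩
  have hstep : ∀ e ∈ {e : ℝ | ∃ φ ψ dψ : ℝ → ℝ, MemAdm m l φ ψ dψ ∧ Jen S φ ψ = 1 ∧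
      e = Een S ω ξa s₂ φ ψ dψ}, muInf S ω ξa s₁ - 4 * ω ^ 2 * |s₁ - s₂| ≤ e := by
    rintro e ⟨φ, ψ, dψ, A, hJ, rfl⟩
    have h1 : Een S ω ξa s₁ φ ψ dψ ∈ {e : ℝ | ∃ φ ψ dψ : ℝ → ℝ, MemAdm m l φ ψ dψ ∧
        Jen S φ ψ = 1 ∧ e = Een S ω ξa s₁ φ ψ dψ} := ⟨φ, ψ, dψ, A, hJ, rfl⟩
    have h2 : muInf S ω ξa s₁ ≤ Een S ω ξa s₁ φ ψ dψ := csInf_le hbdd h1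
    have hdiff := een_diff S hm hl ω ξa s₁ s₂ A
    obtain ⟨hR0, hR2⟩ := rho_phi2_bounds S hm hl A hJ
    set R := ∫ x in Set.Ioo (-m) l, S.ρ x * (φ x) ^ 2 with hRdef
    have habs : 2 * ω ^ 2 * (s₁ - s₂) * R ≤ 4 * ω ^ 2 * |s₁ - s₂| := by
      calc 2 * ω ^ 2 * (s₁ - s₂) * R ≤ |2 * ω ^ 2 * (s₁ - s₂) * R| := le_abs_self _
        _ = 2 * ω ^ 2 * |s₁ - s₂| * R := by
            rw [abs_mul, abs_of_nonneg hR0, abs_mul,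
              abs_of_nonneg (by positivity : (0:ℝ) ≤ 2 * ω ^ 2)]
        _ ≤ 4 * ω ^ 2 * |s₁ - s₂| := by
            nlinarith [mul_nonneg (mul_nonneg (by positivity : (0:ℝ) ≤ 2 * ω ^ 2)
              (abs_nonneg (s₁ - s₂))) (by linarith : (0:ℝ) ≤ 2 - R)]
    linarith
  have hfin : muInf S ω ξa s₁ - 4 * ω ^ 2 * |s₁ - s₂| ≤ muInf S ω ξa s₂ := by
    unfold muInf
    exact le_csInf hne₂ hstep
  linarith

lemma muInf_abs_sub (S : SteadyState m l g Pp Pm) (hm : 0 < m) (hl : 0 < l)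
    (hg0 : 0 ≤ g) (ω : ℝ) {ξa : ℝ} (hξa : 0 ≤ ξa) {s₁ s₂ : ℝ}
    (hs₁ : 0 < s₁) (hs₂ : 0 < s₂) :
    |muInf S ω ξa s₁ - muInf S ω ξa s₂| ≤ 4 * ω ^ 2 * |s₁ - s₂| := by
  have a := muInf_step S hm hl hg0 ω hξa hs₁ hs₂
  have b := muInf_step S hm hl hg0 ω hξa hs₂ hs₁
  rw [abs_sub_comm s₂ s₁] at b
  rw [abs_le]
  constructor <;> linarith

end MainLemmas

/-- **Proposition 2.4**: `μ = μ(s)` is locally Lipschitz on `(0,∞)`, and in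
particular continuous on `(0,∞)`. -/
theorem mu_locally_lipschitz
    {m l g : ℝ} (hm : 0 < m) (hl : 0 < l) (hg : 0 < g) (ω : ℝ)
    {Pp Pm : PressureLaw} (S : SteadyState m l g Pp Pm)
    (ξ : ℝ × ℝ) (hξ : ξ ≠ 0) :
    (∀ a b : ℝ, 0 < a → a ≤ b →
      ∃ K : ℝ, 0 < K ∧ ∀ s₁ ∈ Set.Icc a b, ∀ s₂ ∈ Set.Icc a b,
        |muInf S ω (mag ξ) s₁ - muInf S ω (mag ξ) s₂| ≤ K * |s₁ - s₂|)
    ∧ ContinuousOn (fun s => muInf S ω (mag ξ) s) (Set.Ioi 0) := by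
  have hξa : 0 ≤ mag ξ := Real.sqrt_nonneg _
  constructor
  · intro a b ha hab
    refine ⟨4 * ω ^ 2 + 1, by positivity, fun s₁ hs₁ s₂ hs₂ => ?_⟩
    have h1 : 0 < s₁ := lt_of_lt_of_le ha hs₁.1
    have h2 : 0 < s₂ := lt_of_lt_of_le ha hs₂.1
    have h := muInf_abs_sub S hm hl hg.le ω hξa h1 h2
    nlinarith [abs_nonneg (s₁ - s₂)]
  · intro s hs
    have hs' : (0:ℝ) < s := hs
    rw [Metric.continuousWithinAt_iff]
    intro ε hε
    have hK : (0:ℝ) < 4 * ω ^ 2 + 1 := by positivity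
    refine ⟨ε / (4 * ω ^ 2 + 1), by positivity, fun y hy hdist => ?_⟩
    have hy' : (0:ℝ) < y := hy
    rw [Real.dist_eq] at hdist
    rw [Real.dist_eq]
    have h := muInf_abs_sub S hm hl hg.le ω hξa hy' hs'
    show |muInf S ω (mag ξ) y - muInf S ω (mag ξ) s| < ε
    calc |muInf S ω (mag ξ) y - muInf S ω (mag ξ) s| ≤ 4 * ω ^ 2 * |y - s| := h
      _ ≤ (4 * ω ^ 2 + 1) * |y - s| := by nlinarith [abs_nonneg (y - s)]
      _ < (4 * ω ^ 2 + 1) * (ε / (4 * ω ^ 2 + 1)) := mul_lt_mul_of_pos_left hdist hK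
      _ = ε := by field_simp
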